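/- Fix y ∈ 𝒴 with L_{yy} > 0, let c = c(y) be the core of the part containing y, and let 1 ≤ k ≤ N. Then ∑_{Y k-singular, y ∈ Y} det(L_Y) = L_{yy} · ∑_{S} det( (L − L_{yy}^{−1} · L_{·,y} L_{y,·})_S ), where the second sum ranges over all S ⊆ 𝒴 with |S| = k−1, S singular with respect to Π, and S ∩ 𝒴_c = ∅, and where L_{·,y} L_{y,·} denotes the rank-one N×N matrix with entries L_{iy}·L_{yj}. -/

import Mathlib

/-!
Removing `y` is a bijection from the `k`-singular sets containing `y` onto the `(k-1)`-singular
sets avoiding the part of `y`, since a singular set containing `y` meets that part only in `y`.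
Along this bijection each term factors as `det L_{S ∪ {y}} = L_{yy} · det (L / L_{yy})_S`, the
Schur complement of the pivot `L_{yy}`.
-/

open Matrix Finset

variable {𝒴 : Type*}

/-- Principal minor of `A` indexed by the finite set `S`:
the determinant of the principal submatrix `A_S`. -/
noncomputable def pminor [DecidableEq 𝒴] (A : Matrix 𝒴 𝒴 ℝ) (S : Finset 𝒴) : ℝ :=
  (A.submatrix (fun i : S => (i : 𝒴)) (fun j : S => (j : 𝒴))).det

/-- `Y` is singular with respect to the partition whose parts are the fibers of the
core map `part` (so `𝒴_c = part⁻¹(c)`): every part contains at most one element of `Y`. -/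
def IsSingular [DecidableEq 𝒴] (part : 𝒴 → 𝒴) (Y : Finset 𝒴) : Prop :=
  ∀ c : 𝒴, (Y.filter fun y => part y = c).card ≤ 1

instance [DecidableEq 𝒴] [Fintype 𝒴] (part : 𝒴 → 𝒴) : DecidablePred (IsSingular part) :=
  fun _ => by unfold IsSingular; infer_instance

/-- The size `|𝒴_c|` of the part with core `c`. -/
def psize [Fintype 𝒴] [DecidableEq 𝒴] (part : 𝒴 → 𝒴) (c : 𝒴) : ℕ :=
  (Finset.univ.filter fun y => part y = c).card

/-- The rescaled core kernel `L̃` with entries `L̃_{c,c'} = sqrt(|𝒴_c|·|𝒴_{c'}|)·L_{c,c'}`. -/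
noncomputable def coreK [Fintype 𝒴] [DecidableEq 𝒴] (L : Matrix 𝒴 𝒴 ℝ) (part : 𝒴 → 𝒴) :
    Matrix 𝒴 𝒴 ℝ :=
  fun i j => Real.sqrt ((psize part i : ℝ) * (psize part j : ℝ)) * L i j

lemma isSingular_iff_injOn [DecidableEq 𝒴] {part : 𝒴 → 𝒴} {Y : Finset 𝒴} :
    IsSingular part Y ↔ Set.InjOn part Y := by
  simp only [IsSingular, Finset.card_le_one, Finset.mem_filter, Set.InjOn, Finset.mem_coe]
  exact ⟨fun h a ha b hb hab => h (part b) a ⟨ha, hab⟩ b ⟨hb, rfl⟩,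
    fun h c a ha b hb => h ha.1 hb.1 (ha.2.trans hb.2.symm)⟩

lemma isSingular_insert_iff [DecidableEq 𝒴] {part : 𝒴 → 𝒴} {y : 𝒴} {S : Finset 𝒴}
    (hyS : y ∉ S) :
    IsSingular part (insert y S) ↔ IsSingular part S ∧ ∀ s ∈ S, part s ≠ part y := by
  rw [isSingular_iff_injOn, isSingular_iff_injOn, Finset.coe_insert,
    Set.injOn_insert (by simpa using hyS)]
  simp

lemma insert_mem_filter_powersetCard_iff [Fintype 𝒴] [DecidableEq 𝒴] {part : 𝒴 → 𝒴}
    {y : 𝒴} {S : Finset 𝒴} (hyS : y ∉ S) {k : ℕ} (hk : 1 ≤ k) :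
    insert y S ∈ (univ.powersetCard k).filter (fun Y => IsSingular part Y ∧ y ∈ Y) ↔
      S ∈ (univ.powersetCard (k - 1)).filter
        (fun S => IsSingular part S ∧ ∀ s ∈ S, part s ≠ part y) := by
  simp only [mem_filter, mem_powersetCard_univ, card_insert_of_notMem hyS,
    isSingular_insert_iff hyS, mem_insert_self, and_true]
  exact and_congr_left fun _ => by omega

lemma pminor_insert [DecidableEq 𝒴] (A : Matrix 𝒴 𝒴 ℝ) {y : 𝒴} (hA : A y y ≠ 0)
    {S : Finset 𝒴} (hyS : y ∉ S) :
    pminor A (insert y S) =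
      A y y * pminor (fun i j => A i j - (A y y)⁻¹ * (A i y * A y j)) S := by
  let e : S ⊕ Unit ≃ (insert y S : Finset 𝒴) :=
    ((Finset.subtypeInsertEquivOption hyS).trans (Equiv.optionEquivSumPUnit S)).symm
  let _ : Invertible (diagonal fun _ : Unit => A y y) :=
    ⟨diagonal fun _ => (A y y)⁻¹, by simp [hA], by simp [hA]⟩
  have hblocks : (A.submatrix (fun i : (insert y S : Finset 𝒴) => (i : 𝒴))
      (fun j : (insert y S : Finset 𝒴) => (j : 𝒴))).submatrix e e =
      fromBlocks (A.submatrix (fun i : S => (i : 𝒴)) (fun j : S => (j : 𝒴)))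
        (of fun i _ => A (i : 𝒴) y) (of fun _ j => A y (j : 𝒴)) (diagonal fun _ => A y y) := by
    ext (i | ⟨⟩) (j | ⟨⟩) <;> rfl
  unfold pminor
  rw [← det_submatrix_equiv_self e, hblocks, det_fromBlocks₂₂, det_diagonal,
    Finset.prod_const, Finset.card_univ, Fintype.card_unit, pow_one]
  congr 2
  ext i j
  change _ = A i j - (A y y)⁻¹ * (A i y * A y j)
  simp only [invOf_eq_nonsing_inv, inv_subsingleton, diagonal_apply_eq, Ring.inverse_eq_inv',
    Matrix.sub_apply, submatrix_apply, mul_apply, univ_unique, PUnit.default_eq_unit, of_apply,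
    sum_const, card_singleton, one_smul, sub_right_inj]
  ring

theorem sum_singular_containing_point_general
    [Fintype 𝒴] [DecidableEq 𝒴]
    (L : Matrix 𝒴 𝒴 ℝ)
    (part : 𝒴 → 𝒴)
    (y : 𝒴) (hy : 0 < L y y)
    (k : ℕ) (hk1 : 1 ≤ k) :
    ∑ Y ∈ (Finset.univ.powersetCard k).filter
        (fun Y => IsSingular part Y ∧ y ∈ Y), pminor L Y
      = L y y *
        ∑ S ∈ (Finset.univ.powersetCard (k - 1)).filter
            (fun S => IsSingular part S ∧ ∀ s ∈ S, part s ≠ part y),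
          pminor (fun i j => L i j - (L y y)⁻¹ * (L i y * L y j)) S := by
  rw [mul_sum]
  refine sum_nbij' (fun Y => Y.erase y) (insert y) (fun Y hY => ?_) (fun S hS => ?_)
    (fun Y hY => insert_erase (mem_filter.mp hY).2.2)
    (fun S hS => erase_insert fun hyS => (mem_filter.mp hS).2.2 y hyS rfl) (fun Y hY => ?_)
  · rw [← insert_mem_filter_powersetCard_iff (notMem_erase y Y) hk1,
      insert_erase (mem_filter.mp hY).2.2]
    exact hY
  · exact (insert_mem_filter_powersetCard_iff
      (fun hyS => (mem_filter.mp hS).2.2 y hyS rfl) hk1).2 hS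
  · conv_lhs => rw [← insert_erase (mem_filter.mp hY).2.2]
    exact pminor_insert L hy.ne' (notMem_erase y Y)

/-- for a fixed `y` with `L_{yy} > 0` lying in the part with core `c = c(y)`,
the sum of `det(L_Y)` over all `k`-singular `Y` containing `y` equals
`L_{yy} · ∑_S det((L − L_{yy}⁻¹·L_{·,y}L_{y,·})_S)`, the sum being over all `(k−1)`-element
singular `S` disjoint from the part `𝒴_c`. -/
theorem sum_singular_containing_point
    [Fintype 𝒴] [DecidableEq 𝒴]
    (L : Matrix 𝒴 𝒴 ℝ) (hsym : L.IsSymm)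
    (part : 𝒴 → 𝒴) (C : Finset 𝒴)
    (hmem : ∀ y, part y ∈ C) (hfix : ∀ c ∈ C, part c = c)
    (y : 𝒴) (hy : 0 < L y y)
    (k : ℕ) (hk1 : 1 ≤ k) (hkN : k ≤ Fintype.card 𝒴) :
    ∑ Y ∈ (Finset.univ.powersetCard k).filter
        (fun Y => IsSingular part Y ∧ y ∈ Y), pminor L Y
      = L y y *
        ∑ S ∈ (Finset.univ.powersetCard (k - 1)).filter
            (fun S => IsSingular part S ∧ ∀ s ∈ S, part s ≠ part y),
          pminor (fun i j => L i j - (L y y)⁻¹ * (L i y * L y j)) S :=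
  sum_singular_containing_point_general L part y hy k hk1
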